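/- Suppose the demographic parameters satisfy the uniform boundedness condition with constant C. If (𝒮_t)_{t∈[0,T]} is a weakly continuous family of finite Borel measures on 𝕊 satisfying the weak limit equation, then the total mass satisfies 𝒮_t(𝕊) ≤ 𝒮_0(𝕊) · e^{kCt} for every t ∈ [0,T]. -/

import Mathlib

open MeasureTheory Set

namespace GeneralBranching3

/-- The type–age state space `𝕊 = Fin k × [0, ω]`. -/
abbrev SS (k : ℕ) (ω : ℝ) : Type := Fin k × (Icc (0:ℝ) ω)

/-- The age `0` as an element of `[0, ω]`. -/
def ageZero {ω : ℝ} (hω : 0 ≤ ω) : Icc (0:ℝ) ω := ⟨0, Set.left_mem_Icc.mpr hω⟩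

/-- `f'` is the age derivative of `f : 𝕊 → ℝ` (derivative in the second, continuous
variable, taken within `[0, ω]`). -/
def IsAgeDeriv {k : ℕ} {ω : ℝ} (hω : 0 ≤ ω) (f f' : SS k ω → ℝ) : Prop :=
  ∀ (i : Fin k) (v : Icc (0:ℝ) ω),
    HasDerivWithinAt (fun x : ℝ => f (i, projIcc 0 ω hω x)) (f' (i, v)) (Icc 0 ω) (v : ℝ)

/-- The operator `L_μ f = f' − h_μ f + Σ_{i} f(i,0) n^i_μ` (on `f ∈ C¹(𝕊)`, with given
age derivative `f'`). -/
noncomputable def Lfull {k : ℕ} {ω : ℝ} (hω : 0 ≤ ω)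
    (h : Measure (SS k ω) → SS k ω → ℝ)
    (n : Fin k → Measure (SS k ω) → SS k ω → ℝ)
    (μ : Measure (SS k ω)) (f f' : SS k ω → ℝ) (s : SS k ω) : ℝ :=
  f' s - h μ s * f s + ∑ i : Fin k, f (i, ageZero hω) * n i μ s

/-- The family `(S_t)_{t∈[0,T]}` is weakly continuous. -/
def WeaklyContinuous {k : ℕ} {ω : ℝ} (T : ℝ) (S : ℝ → Measure (SS k ω)) : Prop :=
  ∀ f : SS k ω → ℝ, Continuous f →
    ContinuousOn (fun t => ∫ s, f s ∂(S t)) (Icc 0 T)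

/-- `(S_t)_{t∈[0,T]}` satisfies the weak limit equation: for every `f ∈ C¹(𝕊)` and
`t ∈ [0,T]`, `u ↦ (L_{S_u} f, S_u)` is integrable on `[0,t]` and
`(f, S_t) = (f, S_0) + ∫₀ᵗ (L_{S_u} f, S_u) du`. -/
def WeakEq {k : ℕ} {ω : ℝ} (hω : 0 ≤ ω) (T : ℝ)
    (h : Measure (SS k ω) → SS k ω → ℝ)
    (n : Fin k → Measure (SS k ω) → SS k ω → ℝ)
    (S : ℝ → Measure (SS k ω)) : Prop :=
  ∀ f f' : SS k ω → ℝ, Continuous f → Continuous f' → IsAgeDeriv hω f f' →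
    ∀ t ∈ Icc (0:ℝ) T,
      IntervalIntegrable
        (fun u => ∫ s, Lfull hω h n (S u) f f' s ∂(S u)) volume 0 t ∧
      (∫ s, f s ∂(S t)) = (∫ s, f s ∂(S 0)) +
        ∫ u in (0:ℝ)..t, ∫ s, Lfull hω h n (S u) f f' s ∂(S u)

/-- Under the uniform boundedness condition with constant `C`, any weakly
continuous solution of the weak limit equation satisfies the total–mass bound
`S_t(𝕊) ≤ S_0(𝕊) · e^{kCt}` for all `t ∈ [0,T]`. -/
theorem weak_limit_equation_total_mass_bound
    (k : ℕ) (hk : 1 ≤ k) (T ω : ℝ) (hT : 0 < T) (hω : 0 < ω)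
    (h : Measure (SS k ω) → SS k ω → ℝ)
    (n : Fin k → Measure (SS k ω) → SS k ω → ℝ)
    (hmeas : ∀ μ, Measurable (h μ)) (nmeas : ∀ i μ, Measurable (n i μ))
    -- uniform boundedness condition with constant `C`
    (C : ℝ) (hC : 0 ≤ C)
    (hbd : ∀ μ : Measure (SS k ω), IsFiniteMeasure μ → ∀ s, h μ s ∈ Icc (0:ℝ) C)
    (nbd : ∀ i, ∀ μ : Measure (SS k ω), IsFiniteMeasure μ → ∀ s, n i μ s ∈ Icc (0:ℝ) C)
    -- the solution
    (S : ℝ → Measure (SS k ω))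
    (hSfin : ∀ t, IsFiniteMeasure (S t))
    (hScont : WeaklyContinuous T S)
    (hSweak : WeakEq hω.le T h n S) :
    ∀ t ∈ Icc (0:ℝ) T,
      ((S t) univ).toReal ≤ ((S 0) univ).toReal * Real.exp ((k : ℝ) * C * t) := by
  set M : ℝ → ℝ := fun t => ((S t) univ).toReal with hM
  have hMnn : ∀ t, 0 ≤ M t := fun t => ENNReal.toReal_nonneg
  -- continuity of M on [0,T]
  have hMcont : ContinuousOn M (Icc 0 T) := by
    have := hScont (fun _ => (1:ℝ)) continuous_const
    simpa [integral_const, smul_eq_mul, measureReal_def] using this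
  -- weak equation for f = 1
  have hone : IsAgeDeriv hω.le (fun _ : SS k ω => (1:ℝ)) (fun _ => (0:ℝ)) :=
    fun i v => hasDerivWithinAt_const _ _ _
  have hW := hSweak (fun _ => (1:ℝ)) (fun _ => (0:ℝ)) continuous_const continuous_const hone
  set g : ℝ → ℝ := fun u => ∫ s, Lfull hω.le h n (S u) (fun _ => (1:ℝ)) (fun _ => (0:ℝ)) s ∂(S u)
    with hg
  have hWeq : ∀ t ∈ Icc (0:ℝ) T, M t = M 0 + ∫ u in (0:ℝ)..t, g u := by
    intro t ht
    have := (hW t ht).2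
    simpa [integral_const, smul_eq_mul, measureReal_def] using this
  -- pointwise bound g u ≤ k*C*M u
  have hgle : ∀ u, g u ≤ (k : ℝ) * C * M u := by
    intro u
    have hfin := hSfin u
    have hbound : ∀ s, Lfull hω.le h n (S u) (fun _ => (1:ℝ)) (fun _ => (0:ℝ)) s ≤ (k : ℝ) * C := by
      intro s
      have h1 := hbd (S u) hfin s
      have h2 : ∑ i : Fin k, (1:ℝ) * n i (S u) s ≤ ∑ _i : Fin k, C := by
        apply Finset.sum_le_sum
        intro i _
        simpa using (nbd i (S u) hfin s).2
      have h3 : ∑ i : Fin k, n i (S u) s ≤ (k:ℝ) * C := by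
        calc ∑ i : Fin k, n i (S u) s ≤ ∑ _i : Fin k, C :=
              Finset.sum_le_sum fun i _ => (nbd i (S u) hfin s).2
          _ = (k:ℝ) * C := by simp [mul_comm]
      simp only [Lfull, mul_one, one_mul]
      linarith [h1.1]
    have hmeasL : Measurable fun s => Lfull hω.le h n (S u) (fun _ => (1:ℝ)) (fun _ => (0:ℝ)) s := by
      unfold Lfull
      apply Measurable.add
      · exact (measurable_const.sub ((hmeas (S u)).mul measurable_const))
      · exact Finset.measurable_sum _ fun i _ => (measurable_const.mul (nmeas i (S u)))
    have hInt : Integrable (fun s => Lfull hω.le h n (S u) (fun _ => (1:ℝ)) (fun _ => (0:ℝ)) s) (S u) := by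
      apply Integrable.mono' (integrable_const ((k:ℝ) * C)) hmeasL.aestronglyMeasurable
      filter_upwards with s
      rw [Real.norm_eq_abs, abs_le]
      constructor
      · have h1 := hbd (S u) hfin s
        have h2 : (0:ℝ) ≤ ∑ i : Fin k, (1:ℝ) * n i (S u) s :=
          Finset.sum_nonneg fun i _ => by simpa using (nbd i (S u) hfin s).1
        have hkC : C ≤ (k:ℝ) * C := le_mul_of_one_le_left hC (by exact_mod_cast hk)
        simp only [Lfull, mul_one]
        nlinarith [h1.2]
      · exact hbound s
    calc g u ≤ ∫ _ : SS k ω, (k : ℝ) * C ∂(S u) :=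
          integral_mono hInt (integrable_const _) hbound
      _ = (k : ℝ) * C * M u := by simp [integral_const, smul_eq_mul, mul_comm, measureReal_def, hM]
  -- clamp and the dominating function G
  set clamp : ℝ → ℝ := fun u => max 0 (min u T) with hclamp
  have hclampmem : ∀ u, clamp u ∈ Icc (0:ℝ) T :=
    fun u => ⟨le_max_left _ _, max_le (le_of_lt hT) (min_le_right _ _)⟩
  have hclampid : ∀ u ∈ Icc (0:ℝ) T, clamp u = u := by
    intro u hu
    simp [hclamp, min_eq_left hu.2, max_eq_right hu.1]
  set G : ℝ → ℝ := fun u => (k : ℝ) * C * M (clamp u) with hG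
  have hGcont : Continuous G := by
    apply Continuous.mul continuous_const
    exact hMcont.comp_continuous (continuous_const.max (continuous_id.min continuous_const))
      hclampmem
  set φ : ℝ → ℝ := fun x => M 0 + ∫ u in (0:ℝ)..x, G u with hφ
  have hφderiv : ∀ x : ℝ, HasDerivAt φ (G x) x := by
    intro x
    exact (hGcont.integral_hasStrictDerivAt 0 x).hasDerivAt.const_add (M 0)
  -- M ≤ φ on [0,T]
  have hMφ : ∀ x ∈ Icc (0:ℝ) T, M x ≤ φ x := by
    intro x hx
    rw [hWeq x hx]
    refine add_le_add le_rfl ?_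
    apply intervalIntegral.integral_mono_on hx.1 (hW x hx).1 (hGcont.intervalIntegrable 0 x)
    intro u hu
    have huT : u ∈ Icc (0:ℝ) T := ⟨hu.1, hu.2.trans hx.2⟩
    calc g u ≤ (k:ℝ) * C * M u := hgle u
      _ = G u := by rw [hG]; simp [hclampid u huT]
  have hφnn : ∀ x ∈ Icc (0:ℝ) T, 0 ≤ φ x := fun x hx => (hMnn x).trans (hMφ x hx)
  intro t ht
  -- Grönwall
  have hgron := norm_le_gronwallBound_of_norm_deriv_right_le (f := φ) (f' := G)
    (δ := M 0) (K := (k:ℝ) * C) (ε := 0) (a := 0) (b := t)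
    (hφderiv · |>.continuousAt.continuousWithinAt |> fun _ _ => by assumption)
    (fun x _ => (hφderiv x).hasDerivWithinAt)
    (by simp [hφ, Real.norm_eq_abs, abs_of_nonneg (hMnn 0)])
    ?_ t ⟨le_refl t |>.trans (le_refl t) |> fun _ => ht.1, le_refl t⟩
  · rw [gronwallBound_ε0, sub_zero] at hgron
    calc M t ≤ φ t := hMφ t ht
      _ ≤ ‖φ t‖ := le_abs_self _
      _ ≤ M 0 * Real.exp ((k:ℝ) * C * t) := hgron
  · intro x hx
    have hxT : x ∈ Icc (0:ℝ) T := ⟨hx.1, hx.2.le.trans ht.2⟩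
    have : G x = (k:ℝ) * C * M x := by rw [hG]; simp [hclampid x hxT]
    rw [Real.norm_eq_abs, Real.norm_eq_abs, abs_of_nonneg (hφnn x hxT), this,
      abs_of_nonneg (mul_nonneg (mul_nonneg (Nat.cast_nonneg k) hC) (hMnn x)), add_zero]
    exact mul_le_mul_of_nonneg_left (hMφ x hxT) (mul_nonneg (Nat.cast_nonneg k) hC)


end GeneralBranching3
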